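/- arXiv:0810.5217 — 3 statements merged into one kernel-verified Lean document; each statement's English description precedes it below -/
import Mathlib

section
/- Let 𝔐 = ⟨⟨θ_α : α ≤ κ⟩, ⟨𝔉_{αβ} : α < β ≤ κ⟩⟩ be a simplified (κ,1)-morass. If α < β ≤ κ, τ₁, τ₂ < θ_α, f₁, f₂ ∈ 𝔉_{αβ}, and f₁(τ₁) = f₂(τ₂), then τ₁ = τ₂ and f₁ ↾ τ₁ = f₂ ↾ τ₂. -/
/-!
Coherence is proved by induction on `β`. For `β = γ + 1` the maps of `𝔉_{γ,γ+1}` are the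
identity and `f_γ`; since `f_γ` is the identity below `δ` and jumps above `θ_γ` at `δ`, a value
of `id` can equal a value of `f_γ` only below `δ`, where the two maps agree. A pair in
`𝔉_{α,γ+1}` factors through `𝔉_{αγ}` by (P2), and coherence passes to composites. At limit `β`,
(P4) factors both maps through one strictly increasing `g ∈ 𝔉_{γβ}` with `γ < β`, and the
induction hypothesis at `γ` applies.
-/

open Ordinal Set

/-- A simplified `(κ,1)`-morass (Velleman).  Morass maps are coded as total
functions `Ordinal → Ordinal`, constrained only on `Iio (θ α)`. -/
structure SimplifiedMorass (κ : Cardinal.{0}) where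
  θ : Ordinal → Ordinal
  F : Ordinal → Ordinal → Set (Ordinal → Ordinal)
  fa : Ordinal → Ordinal → Ordinal
  theta_zero : θ 0 = 1
  theta_top : θ κ.ord = (Order.succ κ).ord
  theta_pos : ∀ α < κ.ord, 0 < θ α
  theta_lt : ∀ α < κ.ord, θ α < κ.ord
  F_mono : ∀ α β, ∀ f ∈ F α β, StrictMonoOn f (Set.Iio (θ α))
  F_maps : ∀ α β, ∀ f ∈ F α β, ∀ ξ < θ α, f ξ < θ β
  P1 : ∀ α β, α < β → β < κ.ord → Cardinal.mk ↥(F α β) < Cardinal.lift.{1} κ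
  P2a : ∀ α β γ, α < β → β < γ → γ ≤ κ.ord →
    ∀ h ∈ F α γ, ∃ f ∈ F β γ, ∃ g ∈ F α β, ∀ ξ < θ α, h ξ = f (g ξ)
  P2b : ∀ α β γ, α < β → β < γ → γ ≤ κ.ord →
    ∀ f ∈ F β γ, ∀ g ∈ F α β, ∃ h ∈ F α γ, ∀ ξ < θ α, h ξ = f (g ξ)
  P3a : ∀ α < κ.ord, fa α ∈ F α (α + 1)
  P3b : ∀ α < κ.ord, ∃ δ < θ α, (∀ ξ < δ, fa α ξ = ξ) ∧ θ α ≤ fa α δ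
  P3c : ∀ α < κ.ord, ∃ g ∈ F α (α + 1), ∀ ξ < θ α, g ξ = ξ
  P3d : ∀ α < κ.ord, ∀ g ∈ F α (α + 1),
    (∀ ξ < θ α, g ξ = ξ) ∨ (∀ ξ < θ α, g ξ = fa α ξ)
  P4 : ∀ α ≤ κ.ord, Order.IsSuccLimit α → ∀ β₁ β₂, β₁ < α → β₂ < α →
    ∀ f₁ ∈ F β₁ α, ∀ f₂ ∈ F β₂ α, ∃ γ, β₁ < γ ∧ β₂ < γ ∧ γ < α ∧
      ∃ g ∈ F γ α, ∃ h₁ ∈ F β₁ γ, ∃ h₂ ∈ F β₂ γ,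
        (∀ ξ < θ β₁, f₁ ξ = g (h₁ ξ)) ∧ (∀ ξ < θ β₂, f₂ ξ = g (h₂ ξ))
  P5 : ∀ α ≤ κ.ord, 0 < α → ∀ τ < θ α, ∃ β < α, ∃ f ∈ F β α, ∃ ξ < θ β, f ξ = τ

/-- The tree relation `s ≺ t` on the morass tree
`T = {⟨α,ν⟩ : α ≤ κ, ν < θ_α}`. -/
def Prec {κ : Cardinal} (M : SimplifiedMorass κ) (s t : Ordinal × Ordinal) : Prop :=
  s.1 < t.1 ∧ t.1 ≤ κ.ord ∧ s.2 < M.θ s.1 ∧ t.2 < M.θ t.1 ∧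
    ∃ f ∈ M.F s.1 t.1, f s.2 = t.2

section

variable {X Y Z : Type*} [LinearOrder X] [LinearOrder Y]

def CoherentPair (θ : X) (g₁ g₂ : X → Z) : Prop :=
  ∀ σ₁ < θ, ∀ σ₂ < θ, g₁ σ₁ = g₂ σ₂ → σ₁ = σ₂ ∧ ∀ ξ < σ₁, g₁ ξ = g₂ ξ

namespace CoherentPair

variable {θ : X} {g₁ g₂ g₁' g₂' : X → Z}

theorem symm (h : CoherentPair θ g₁ g₂) : CoherentPair θ g₂ g₁ := by
  intro σ₂ hσ₂ σ₁ hσ₁ heq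
  obtain ⟨rfl, hagree⟩ := h σ₁ hσ₁ σ₂ hσ₂ heq.symm
  exact ⟨rfl, fun ξ hξ => (hagree ξ hξ).symm⟩

theorem congr (h : CoherentPair θ g₁ g₂) (e₁ : EqOn g₁ g₁' (Iio θ))
    (e₂ : EqOn g₂ g₂' (Iio θ)) : CoherentPair θ g₁' g₂' := by
  intro σ₁ hσ₁ σ₂ hσ₂ heq
  rw [← e₁ hσ₁, ← e₂ hσ₂] at heq
  obtain ⟨rfl, hagree⟩ := h σ₁ hσ₁ σ₂ hσ₂ heq
  refine ⟨rfl, fun ξ hξ => ?_⟩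
  have hξθ : ξ ∈ Iio θ := hξ.trans hσ₁
  rw [← e₁ hξθ, ← e₂ hξθ, hagree ξ hξ]

theorem of_injOn {g : X → Z} (hg : InjOn g (Iio θ)) : CoherentPair θ g g :=
  fun _ hσ₁ _ hσ₂ heq => ⟨hg hσ₁ hσ₂ heq, fun _ _ => rfl⟩

theorem id_of_jump {f : X → X} (hf : MonotoneOn f (Iio θ)) {δ : X} (hδ : δ < θ)
    (hid : ∀ ξ < δ, f ξ = ξ) (hjump : θ ≤ f δ) : CoherentPair θ id f := by
  intro σ₁ hσ₁ σ₂ hσ₂ heq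
  have hσ₂δ : σ₂ < δ := by
    by_contra! hle
    exact (hjump.trans (hf hδ hσ₂ hle)).not_gt (heq ▸ hσ₁)
  obtain rfl : σ₁ = σ₂ := heq.trans (hid σ₂ hσ₂δ)
  exact ⟨rfl, fun ξ hξ => (hid ξ (hξ.trans hσ₂δ)).symm⟩

theorem comp {θ' : Y} {h₁ h₂ : Y → Z} {g₁ g₂ : X → Y} (hh : CoherentPair θ' h₁ h₂)
    (hg : CoherentPair θ g₁ g₂) (hg₁ : StrictMonoOn g₁ (Iio θ))
    (hmaps₁ : MapsTo g₁ (Iio θ) (Iio θ')) (hmaps₂ : MapsTo g₂ (Iio θ) (Iio θ')) :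
    CoherentPair θ (h₁ ∘ g₁) (h₂ ∘ g₂) := by
  intro σ₁ hσ₁ σ₂ hσ₂ heq
  obtain ⟨hgσ, hh_agree⟩ := hh _ (hmaps₁ hσ₁) _ (hmaps₂ hσ₂) heq
  obtain ⟨rfl, hg_agree⟩ := hg σ₁ hσ₁ σ₂ hσ₂ hgσ
  refine ⟨rfl, fun ξ hξ => ?_⟩
  have hgξ : g₁ ξ < g₁ σ₁ := hg₁ (hξ.trans hσ₁) hσ₁ hξ
  exact (hh_agree _ hgξ).trans (congrArg h₂ (hg_agree ξ hξ))

end CoherentPair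

end

namespace SimplifiedMorass

variable {κ : Cardinal} (M : SimplifiedMorass κ)

def Coherent (α β : Ordinal) : Prop :=
  ∀ f₁ ∈ M.F α β, ∀ f₂ ∈ M.F α β, CoherentPair (M.θ α) f₁ f₂

theorem mapsTo_F {α β : Ordinal} {f : Ordinal → Ordinal} (hf : f ∈ M.F α β) :
    MapsTo f (Iio (M.θ α)) (Iio (M.θ β)) :=
  fun ξ hξ => M.F_maps α β f hf ξ hξ

theorem coherent_succ {γ : Ordinal} (hγ : γ < κ.ord) : M.Coherent γ (γ + 1) := by
  obtain ⟨δ, hδ, hid, hjump⟩ := M.P3b γ hγ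
  have hfa := M.F_mono γ (γ + 1) _ (M.P3a γ hγ)
  have hid_fa : CoherentPair (M.θ γ) id (M.fa γ) :=
    .id_of_jump hfa.monotoneOn hδ hid hjump
  have hcases : ∀ u v, (u = id ∨ u = M.fa γ) → (v = id ∨ v = M.fa γ) →
      CoherentPair (M.θ γ) u v := by
    rintro u v (rfl | rfl) (rfl | rfl)
    · exact .of_injOn Function.injective_id.injOn
    · exact hid_fa
    · exact hid_fa.symm
    · exact .of_injOn hfa.injOn
  have hF : ∀ f ∈ M.F γ (γ + 1), ∃ u, (u = id ∨ u = M.fa γ) ∧ EqOn u f (Iio (M.θ γ)) := by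
    intro f hf
    rcases M.P3d γ hγ f hf with e | e
    exacts [⟨id, .inl rfl, fun ξ hξ => (e ξ hξ).symm⟩, ⟨_, .inr rfl, fun ξ hξ => (e ξ hξ).symm⟩]
  intro f₁ hf₁ f₂ hf₂
  obtain ⟨u, hu, e₁⟩ := hF f₁ hf₁
  obtain ⟨v, hv, e₂⟩ := hF f₂ hf₂
  exact (hcases u v hu hv).congr e₁ e₂

theorem coherentPair_of_factor {α γ : Ordinal} {f₁ f₂ g₁ g₂ h₁ h₂ : Ordinal → Ordinal}
    (hh : CoherentPair (M.θ γ) h₁ h₂) (hg : CoherentPair (M.θ α) g₁ g₂)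
    (hg₁ : g₁ ∈ M.F α γ) (hg₂ : g₂ ∈ M.F α γ)
    (e₁ : ∀ ξ < M.θ α, f₁ ξ = h₁ (g₁ ξ)) (e₂ : ∀ ξ < M.θ α, f₂ ξ = h₂ (g₂ ξ)) :
    CoherentPair (M.θ α) f₁ f₂ :=
  (hh.comp hg (M.F_mono α γ g₁ hg₁) (M.mapsTo_F hg₁) (M.mapsTo_F hg₂)).congr
    (fun ξ hξ => (e₁ ξ hξ).symm) (fun ξ hξ => (e₂ ξ hξ).symm)

theorem coherent {α β : Ordinal} (hαβ : α < β) (hβ : β ≤ κ.ord) : M.Coherent α β := by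
  induction β using WellFoundedLT.induction generalizing α with
  | _ β IH =>
  rcases Ordinal.zero_or_succ_or_isSuccLimit β with rfl | ⟨γ, rfl⟩ | hlim
  · exact absurd hαβ (not_lt_zero (a := α))
  · rw [Order.succ_eq_add_one] at *
    have hγ : γ < κ.ord := (lt_add_one γ).trans_le hβ
    rcases (Order.lt_add_one_iff.mp hαβ).eq_or_lt with rfl | hαγ
    · exact M.coherent_succ hγ
    intro f₁ hf₁ f₂ hf₂
    obtain ⟨h₁, hh₁, g₁, hg₁, e₁⟩ := M.P2a α γ (γ + 1) hαγ (lt_add_one γ) hβ f₁ hf₁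
    obtain ⟨h₂, hh₂, g₂, hg₂, e₂⟩ := M.P2a α γ (γ + 1) hαγ (lt_add_one γ) hβ f₂ hf₂
    exact M.coherentPair_of_factor (M.coherent_succ hγ h₁ hh₁ h₂ hh₂)
      (IH γ (lt_add_one γ) hαγ hγ.le g₁ hg₁ g₂ hg₂) hg₁ hg₂ e₁ e₂
  · intro f₁ hf₁ f₂ hf₂
    obtain ⟨γ, hαγ, -, hγβ, g, hg, h₁, hh₁, h₂, hh₂, e₁, e₂⟩ :=
      M.P4 β hβ hlim α α hαβ hαβ f₁ hf₁ f₂ hf₂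
    exact M.coherentPair_of_factor (.of_injOn (M.F_mono γ β g hg).injOn)
      (IH γ hγβ hαγ (hγβ.le.trans hβ) h₁ hh₁ h₂ hh₂) hh₁ hh₂ e₁ e₂

end SimplifiedMorass

/-- Lemma 3.1 (coherence): if `f₁, f₂ ∈ 𝔉_{αβ}` and `f₁(τ₁) = f₂(τ₂)` then
`τ₁ = τ₂` and `f₁ ↾ τ₁ = f₂ ↾ τ₂`. -/
theorem morass_coherence {κ : Cardinal} (M : SimplifiedMorass κ)
    {α β : Ordinal} (hαβ : α < β) (hβ : β ≤ κ.ord)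
    {τ₁ τ₂ : Ordinal} (hτ₁ : τ₁ < M.θ α) (hτ₂ : τ₂ < M.θ α)
    {f₁ f₂ : Ordinal → Ordinal} (hf₁ : f₁ ∈ M.F α β) (hf₂ : f₂ ∈ M.F α β)
    (heq : f₁ τ₁ = f₂ τ₂) :
    τ₁ = τ₂ ∧ ∀ ξ < τ₁, f₁ ξ = f₂ ξ :=
  M.coherent hαβ hβ f₁ hf₁ f₂ hf₂ τ₁ hτ₁ τ₂ hτ₂ heq
end

section
/- Let 𝔐 be a simplified (κ,1)-morass and let ⟨⟨ℙ_η : η ≤ κ⁺⟩, ⟨σ_{st} : s ≺ t⟩, ⟨e_α : α < κ⟩⟩ be an FS system along 𝔐. For any p ∈ ℙ_{κ⁺}, the sequence ⟨γ_n(p) : n ∈ ω⟩ defined in the recursive computation of p* is strictly decreasing as long as it is defined; consequently γ_n(p) = 0 for some n ∈ ω, and the support supp(p) = {γ_n(p) : n ∈ ω} is finite. -/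
open Ordinal Set

/-- An FS system `⟨⟨ℙ_η : η ≤ κ⁺⟩, ⟨σ_{st} : s ≺ t⟩, ⟨e_α : α < κ⟩⟩` along a
simplified `(κ,1)`-morass `M` (Irrgang).  The partial orders `ℙ_η` are coded as
subsets `lev η` of a common ambient partial order `P` (so that
`ℙ_η ⊆_⊥ ℙ_ν` is meaningful), with `ℙ := ℙ_{κ⁺} = lev (θ κ)`. -/
structure FSSystem (κ : Cardinal.{0}) (M : SimplifiedMorass κ) (P : Type)
    [PartialOrder P] where
  lev : Ordinal → Set P
  sig : Ordinal × Ordinal → Ordinal × Ordinal → P → P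
  e : Ordinal → P → P
  -- (FS1)
  lev_mono : ∀ {η ν : Ordinal}, η ≤ ν → lev η ⊆ lev ν
  lev_bot : ∀ {η ν : Ordinal}, η ≤ ν → ∀ p ∈ lev η, ∀ q ∈ lev η,
      (∃ r ∈ lev ν, r ≤ p ∧ r ≤ q) → ∃ r ∈ lev η, r ≤ p ∧ r ≤ q
  lev_limit : ∀ {lam : Ordinal}, Order.IsSuccLimit lam → ∀ p ∈ lev lam, ∃ η < lam, p ∈ lev η
  -- (FS2)
  sig_maps : ∀ {s t}, Prec M s t →
      Set.MapsTo (sig s t) (lev (s.2 + 1)) (lev (t.2 + 1))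
  sig_mono : ∀ {s t}, Prec M s t → ∀ p ∈ lev (s.2 + 1), ∀ q ∈ lev (s.2 + 1),
      q ≤ p → sig s t q ≤ sig s t p
  sig_incomp : ∀ {s t}, Prec M s t → ∀ p ∈ lev (s.2 + 1), ∀ q ∈ lev (s.2 + 1),
      ((∃ r ∈ lev (s.2 + 1), r ≤ p ∧ r ≤ q) ↔
        (∃ r ∈ lev (t.2 + 1), r ≤ sig s t p ∧ r ≤ sig s t q))
  sig_inj : ∀ {s t}, Prec M s t → Set.InjOn (sig s t) (lev (s.2 + 1))
  sig_comm : ∀ {s t u}, Prec M s t → Prec M t u → ∀ p ∈ lev (s.2 + 1),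
      sig t u (sig s t p) = sig s u p
  sig_limit : ∀ {t : Ordinal × Ordinal}, Order.IsSuccLimit t.1 → t.1 ≤ κ.ord →
      t.2 < M.θ t.1 → ∀ p ∈ lev (t.2 + 1),
      ∃ s, Prec M s t ∧ ∃ q ∈ lev (s.2 + 1), sig s t q = p
  -- (FS4)
  sig_coh : ∀ {s t}, Prec M s t → ∀ f ∈ M.F s.1 t.1, f s.2 = t.2 →
      ∀ ν' ≤ s.2, ∀ p ∈ lev (ν' + 1), sig s t p = sig (s.1, ν') (t.1, f ν') p
  -- (FS5)
  sig_id : ∀ {s t}, Prec M s t →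
      (∃ f ∈ M.F s.1 t.1, f s.2 = t.2 ∧ ∀ ξ ≤ s.2, f ξ = ξ) →
      ∀ p ∈ lev (s.2 + 1), sig s t p = p
  -- (FS3)
  e_maps : ∀ α < κ.ord, Set.MapsTo (e α) (lev (M.θ (α + 1))) (lev (M.θ α))
  -- (FS6)(a): `e α p` is a reduction of `p` with respect to `id ↾ ℙ_{θ_α}`
  red_id : ∀ α < κ.ord, ∀ p ∈ lev (M.θ (α + 1)), ∀ q ∈ lev (M.θ α),
      q ≤ e α p → ∃ r ∈ lev (M.θ (α + 1)), r ≤ q ∧ r ≤ p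
  -- (FS6)(b): `e α p` is a reduction of `p` with respect to `σ_α = σ_{f_α}`
  red_sig : ∀ α < κ.ord, ∀ p ∈ lev (M.θ (α + 1)), ∀ q, ∀ ν < M.θ α,
      q ∈ lev (ν + 1) → q ≤ e α p →
      ∃ r ∈ lev (M.θ (α + 1)), r ≤ sig (α, ν) (α + 1, M.fa α ν) q ∧ r ≤ p
  -- (FS7)
  e_id : ∀ α < κ.ord, ∀ p ∈ lev (M.θ α), e α p = p
  e_sig : ∀ α < κ.ord, ∀ ν < M.θ α, ∀ p ∈ lev (ν + 1),
      e α (sig (α, ν) (α + 1, M.fa α ν) p) = p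

/-! The levels `γ_n(p)` are never limits: by (FS2) a preimage at a limit level already comes
from a lower level. So `γ_n = β + 1` and `p_{n+1} = e_β(q_n) ∈ ℙ_{θ_β}`, whence `ν_{n+1} < θ_β`.
If `γ_{n+1} = β' + 1` with `β ≤ β'`, the node of the preimage of `p_{n+1}` lies below
`ν_{n+1} < θ_β ≤ θ_{β'}`, so the identity map of (P3c) together with (FS5) moves that preimage
down to level `β'`, contradicting minimality. Hence the `γ_n` decrease until they reach `0`. -/

theorem StrictMonoOn.le_apply_of_lt {α : Type*} [LinearOrder α] [WellFoundedLT α] {f : α → α}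
    {c : α} (hf : StrictMonoOn f (Iio c)) {x : α} (hx : x < c) : x ≤ f x := by
  by_contra! hfx
  obtain ⟨m, ⟨hmc, hfm⟩, hmin⟩ := wellFounded_lt.has_min {i | i < c ∧ f i < i} ⟨x, hx, hfx⟩
  exact hmin (f m) ⟨hfm.trans hmc, hf (hfm.trans hmc) hmc hfm⟩ hfm

theorem exists_eq_of_lt_while_ne {α : Type*} [Preorder α] [WellFoundedLT α] {f : ℕ → α}
    {a : α} (h : ∀ n, (∀ m ≤ n, f m ≠ a) → f (n + 1) < f n) : ∃ n, f n = a := by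
  by_contra! hne
  obtain ⟨n, hn⟩ := WellFounded.not_rel_apply_succ (r := (· < ·)) f
  exact hn (h n fun m _ => hne m)

namespace SimplifiedMorass

variable {κ : Cardinal.{0}} (M : SimplifiedMorass κ)

theorem theta_pos_of_le {α : Ordinal} (hα : α ≤ κ.ord) : 0 < M.θ α := by
  rcases hα.lt_or_eq with hα | rfl
  · exact M.theta_pos α hα
  · simp [M.theta_top]

theorem nonempty_F {β γ : Ordinal} (hβγ : β < γ) (hγ : γ ≤ κ.ord) : (M.F β γ).Nonempty := by
  induction γ using WellFoundedLT.induction generalizing β with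
  | _ γ ih =>
    obtain ⟨β₀, hβ₀, f, hf, -⟩ :=
      M.P5 γ hγ (zero_le.trans_lt hβγ) 0 (M.theta_pos_of_le hγ)
    rcases lt_trichotomy β β₀ with h | rfl | h
    · obtain ⟨g, hg⟩ := ih β₀ hβ₀ h (hβ₀.le.trans hγ)
      obtain ⟨k, hk, -⟩ := M.P2b β β₀ γ h hβ₀ hγ f hf g hg
      exact ⟨k, hk⟩
    · exact ⟨f, hf⟩
    · obtain ⟨g, hg, -⟩ := M.P2a β₀ β γ h hβγ hγ f hf
      exact ⟨g, hg⟩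

theorem theta_le_theta {β γ : Ordinal} (hβγ : β ≤ γ) (hγ : γ ≤ κ.ord) : M.θ β ≤ M.θ γ := by
  rcases hβγ.lt_or_eq with h | rfl
  · obtain ⟨f, hf⟩ := M.nonempty_F h hγ
    exact le_of_forall_lt fun ξ hξ =>
      ((M.F_mono β γ f hf).le_apply_of_lt hξ).trans_lt (M.F_maps β γ f hf ξ hξ)
  · rfl

end SimplifiedMorass

section Prec

variable {κ : Cardinal.{0}} {M : SimplifiedMorass κ} {s t u : Ordinal × Ordinal}

theorem Prec.snd_le (hst : Prec M s t) : s.2 ≤ t.2 := by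
  obtain ⟨-, -, hs, -, f, hf, hft⟩ := hst
  exact hft ▸ (M.F_mono _ _ f hf).le_apply_of_lt hs

theorem Prec.trans (hst : Prec M s t) (htu : Prec M t u) : Prec M s u := by
  obtain ⟨hst₁, -, hs, -, f, hf, hft⟩ := hst
  obtain ⟨htu₁, hu, -, hu₂, g, hg, hgu⟩ := htu
  obtain ⟨h, hh, hcomp⟩ := M.P2b s.1 t.1 u.1 hst₁ htu₁ hu g hg f hf
  exact ⟨hst₁.trans htu₁, hu, hs, hu₂, h, hh, by rw [hcomp s.2 hs, hft, hgu]⟩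

end Prec

namespace FSSystem

variable {κ : Cardinal.{0}} {M : SimplifiedMorass κ} {P : Type} [PartialOrder P]
  (S : FSSystem κ M P)

theorem exists_lt_mem_lev_add_one {η : Ordinal} {p : P} (hp : p ∈ S.lev η) (hη : η ≠ 0) :
    ∃ η' < η, p ∈ S.lev (η' + 1) := by
  rcases Ordinal.zero_or_succ_or_isSuccLimit η with h | ⟨η', rfl⟩ | hlim
  · exact absurd h hη
  · exact ⟨η', Order.lt_succ η', by rwa [← Order.succ_eq_add_one]⟩
  · obtain ⟨η', hη', hp'⟩ := S.lev_limit hlim p hp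
    exact ⟨η', hη', S.lev_mono le_self_add hp'⟩

theorem image_sig_image_sig {s t u : Ordinal × Ordinal} (hst : Prec M s t) (htu : Prec M t u) :
    S.sig t u '' (S.sig s t '' S.lev (s.2 + 1)) = S.sig s u '' S.lev (s.2 + 1) := by
  rw [image_image]
  exact image_congr fun q hq => S.sig_comm hst htu q hq

/-- For `t = t_n(p)` and `p = p_n`, this is the domain of `p⁽ⁿ⁾`. -/
def sigLevels (t : Ordinal × Ordinal) (p : P) : Set Ordinal :=
  {α | ∃ ν, Prec M (α, ν) t ∧ p ∈ S.sig (α, ν) t '' S.lev (ν + 1)}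

variable {S}

theorem exists_lt_mem_sigLevels_of_isSuccLimit {s t : Ordinal × Ordinal} {p : P}
    (hst : Prec M s t) (hlim : Order.IsSuccLimit s.1) (hp : p ∈ S.sig s t '' S.lev (s.2 + 1)) :
    ∃ α < s.1, α ∈ S.sigLevels t p := by
  obtain ⟨q, hq, rfl⟩ := hp
  obtain ⟨r, hrs, hr⟩ := S.sig_limit hlim (hst.1.le.trans hst.2.1) hst.2.2.1 q hq
  refine ⟨r.1, hrs.1, r.2, hrs.trans hst, ?_⟩
  rw [← S.image_sig_image_sig hrs hst]
  exact mem_image_of_mem _ hr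

theorem mem_sigLevels_of_add_one {α ν : Ordinal} {t : Ordinal × Ordinal} {p : P}
    (hst : Prec M (α + 1, ν) t) (hν : ν < M.θ α) (hp : p ∈ S.sig (α + 1, ν) t '' S.lev (ν + 1)) :
    α ∈ S.sigLevels t p := by
  have hα : α + 1 < κ.ord := hst.1.trans_le hst.2.1
  obtain ⟨g, hg, hgid⟩ := M.P3c α ((lt_add_one α).trans hα)
  have hid : Prec M (α, ν) (α + 1, ν) := ⟨lt_add_one α, hα.le, hν, hst.2.2.1, g, hg, hgid ν hν⟩
  refine ⟨ν, hid.trans hst, ?_⟩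
  obtain ⟨q, hq, rfl⟩ := hp
  have hq_fixed : S.sig (α, ν) (α + 1, ν) q = q :=
    S.sig_id hid ⟨g, hg, hgid ν hν, fun ξ hξ => hgid ξ (hξ.trans_lt hν)⟩ q hq
  exact ⟨q, hq, by rw [← S.sig_comm hid hst q hq, hq_fixed]⟩

theorem eq_zero_or_eq_add_one_of_isLeast_sigLevels {t : Ordinal × Ordinal} {p : P} {γ : Ordinal}
    (hγ : IsLeast (S.sigLevels t p) γ) : γ = 0 ∨ ∃ β, γ = β + 1 := by
  rcases Ordinal.zero_or_succ_or_isSuccLimit γ with h | ⟨β, rfl⟩ | hlim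
  · exact .inl h
  · exact .inr ⟨β, Order.succ_eq_add_one β⟩
  · obtain ⟨ν, hst, hp⟩ := hγ.1
    obtain ⟨α, hα, hmem⟩ := exists_lt_mem_sigLevels_of_isSuccLimit hst hlim hp
    exact absurd (hγ.2 hmem) hα.not_ge

theorem le_of_isLeast_sigLevels_e {β : Ordinal} (hβ : β < κ.ord) {q : P}
    (hq : q ∈ S.lev (M.θ (β + 1))) {t : Ordinal × Ordinal}
    (ht : ∀ η < t.2, S.e β q ∉ S.lev (η + 1)) {γ : Ordinal}
    (hγ : IsLeast (S.sigLevels t (S.e β q)) γ) : γ ≤ β := by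
  have ht_lt : t.2 < M.θ β := by
    obtain ⟨η, hη, hmem⟩ :=
      S.exists_lt_mem_lev_add_one (S.e_maps β hβ hq) (M.theta_pos β hβ).ne'
    exact (not_lt.1 fun h => ht η h hmem).trans_lt hη
  rcases eq_zero_or_eq_add_one_of_isLeast_sigLevels hγ with rfl | ⟨β', rfl⟩
  · exact zero_le
  obtain ⟨ν, hst, hp⟩ := hγ.1
  have hθ : M.θ β' ≤ ν := by
    by_contra! hν
    exact (lt_add_one β').not_ge (hγ.2 (mem_sigLevels_of_add_one hst hν hp))
  have hβ' : β' < β := by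
    by_contra! hle
    have hβ'κ : β' ≤ κ.ord := ((lt_add_one β').trans_le (hst.1.le.trans hst.2.1)).le
    exact (M.theta_le_theta hle hβ'κ).not_gt (hθ.trans_lt (hst.snd_le.trans_lt ht_lt))
  exact Order.add_one_le_iff.2 hβ'

end FSSystem

theorem fs_support_finite_general {κ : Cardinal}
    (M : SimplifiedMorass κ) {P : Type} [PartialOrder P]
    (S : FSSystem κ M P)
    (pn : ℕ → P) (νn γn : ℕ → Ordinal) (sn : ℕ → Ordinal × Ordinal) (qn : ℕ → P)
    (hrec : ∀ n, (∀ m < n, γn m ≠ 0) →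
      (pn n ∈ S.lev (νn n + 1) ∧ ∀ η < νn n, pn n ∉ S.lev (η + 1)) ∧
      ((sn n).1 = γn n ∧ Prec M (sn n) (κ.ord, νn n) ∧
        qn n ∈ S.lev ((sn n).2 + 1) ∧ S.sig (sn n) (κ.ord, νn n) (qn n) = pn n) ∧
      (∀ s', Prec M s' (κ.ord, νn n) →
        (∃ q' ∈ S.lev (s'.2 + 1), S.sig s' (κ.ord, νn n) q' = pn n) →
        γn n ≤ s'.1) ∧
      (∀ β, γn n = β + 1 → pn (n + 1) = S.e β (qn n))) :
    (∀ n, (∀ m ≤ n, γn m ≠ 0) → γn (n + 1) < γn n) ∧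
    (∃ n, γn n = 0) ∧
    (∃ N, γn N = 0 ∧ (∀ m < N, γn m ≠ 0) ∧
      Set.Finite {α | ∃ m ≤ N, γn m = α}) := by
  have hleast : ∀ n, (∀ m < n, γn m ≠ 0) →
      IsLeast (S.sigLevels (κ.ord, νn n) (pn n)) (γn n) := by
    intro n hn
    obtain ⟨-, ⟨hs, hst, hq, hsig⟩, hmin, -⟩ := hrec n hn
    refine ⟨⟨(sn n).2, hs ▸ hst, qn n, hq, hs ▸ hsig⟩, ?_⟩
    rintro α ⟨ν, hst', hp'⟩
    exact hmin (α, ν) hst' hp'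
  have hdec : ∀ n, (∀ m ≤ n, γn m ≠ 0) → γn (n + 1) < γn n := by
    intro n hn
    have hn' : ∀ m < n, γn m ≠ 0 := fun m hm => hn m hm.le
    obtain ⟨β, hβ⟩ := (FSSystem.eq_zero_or_eq_add_one_of_isLeast_sigLevels
      (hleast n hn')).resolve_left (hn n le_rfl)
    obtain ⟨-, ⟨hs, ⟨hγκ, -, hθ, -⟩, hq, -⟩, -, hstep⟩ := hrec n hn'
    rw [hs, hβ] at hγκ hθ
    have hq' : qn n ∈ S.lev (M.θ (β + 1)) := S.lev_mono (Order.add_one_le_iff.2 hθ) hq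
    have hn₁ : ∀ m < n + 1, γn m ≠ 0 := fun m hm => hn m (Nat.lt_succ_iff.1 hm)
    obtain ⟨⟨-, hν⟩, -⟩ := hrec (n + 1) hn₁
    have hleast₁ := hleast (n + 1) hn₁
    rw [hstep β hβ] at hν hleast₁
    rw [hβ, Order.lt_add_one_iff]
    exact FSSystem.le_of_isLeast_sigLevels_e ((lt_add_one β).trans hγκ) hq' hν hleast₁
  have hzero : ∃ n, γn n = 0 := exists_eq_of_lt_while_ne hdec
  classical
  exact ⟨hdec, hzero, Nat.find hzero, Nat.find_spec hzero, fun m hm => Nat.find_min hzero hm,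
    (Set.finite_Iic _).image γn⟩

/-- The sequence `⟨γ_n(p) : n < ω⟩` from the recursive computation of `p*` is
strictly decreasing as long as it is defined; consequently `γ_n(p) = 0` for
some `n`, and the support `supp(p) = {γ_n(p) : n < ω}` is finite.  The
recursion data (`p_n`, `ν_n(p)`, `γ_n(p)`, the minimal node `s_n` and the
pull-back `q_n` of `p_n`) is given via its defining properties. -/
theorem fs_support_finite {κ : Cardinal} (hreg : κ.IsRegular)
    (M : SimplifiedMorass κ) {P : Type} [PartialOrder P]
    (S : FSSystem κ M P) (p : P) (hp : p ∈ S.lev (M.θ κ.ord))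
    (pn : ℕ → P) (νn γn : ℕ → Ordinal) (sn : ℕ → Ordinal × Ordinal) (qn : ℕ → P)
    (h0 : pn 0 = p)
    (hrec : ∀ n, (∀ m < n, γn m ≠ 0) →
      (pn n ∈ S.lev (νn n + 1) ∧ ∀ η < νn n, pn n ∉ S.lev (η + 1)) ∧
      ((sn n).1 = γn n ∧ Prec M (sn n) (κ.ord, νn n) ∧
        qn n ∈ S.lev ((sn n).2 + 1) ∧ S.sig (sn n) (κ.ord, νn n) (qn n) = pn n) ∧
      (∀ s', Prec M s' (κ.ord, νn n) →
        (∃ q' ∈ S.lev (s'.2 + 1), S.sig s' (κ.ord, νn n) q' = pn n) →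
        γn n ≤ s'.1) ∧
      (∀ β, γn n = β + 1 → pn (n + 1) = S.e β (qn n))) :
    (∀ n, (∀ m ≤ n, γn m ≠ 0) → γn (n + 1) < γn n) ∧
    (∃ n, γn n = 0) ∧
    (∃ N, γn N = 0 ∧ (∀ m < N, γn m ≠ 0) ∧
      Set.Finite {α | ∃ m ≤ N, γn m = α}) :=
  fs_support_finite_general M S pn νn γn sn qn hrec
end

section
/- Let θ > ω₁ + 1 be an ordinal and let P(θ) be Tennenbaum's forcing of finite trees on θ. Then the set A = { p ∈ P(θ) : x_p = {α, α+1, α+2, ω₁, ω₁+1} for some α < ω₁, with α <_p α+1 <_p ω₁, α <_p α+2 <_p ω₁+1, and α+1 ≁_p α+2 } is an antichain in P(θ) of size ω₁. In particular, P(θ) does not satisfy the countable chain condition. -/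
open Ordinal

/-- Tennenbaum's forcing `P(θ)`: finite trees `p = ⟨x_p, <_p⟩` with
`x_p ⊆ θ` finite and `<_p` a tree order contained in the ordinal order. -/
structure TCond (θ : Ordinal) where
  x : Finset Ordinal
  lt : Ordinal → Ordinal → Prop
  mem_lt : ∀ a ∈ x, a < θ
  lt_mem : ∀ a b, lt a b → a ∈ x ∧ b ∈ x
  lt_ord : ∀ a b, lt a b → a < b
  lt_trans : ∀ a b c, lt a b → lt b c → lt a c
  lt_tree : ∀ a b c, lt a c → lt b c → a = b ∨ lt a b ∨ lt b a

/-- `TExt p q`: the condition `p` extends `q`, i.e. `p ≤ q` in `P(θ)`: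
`x_p ⊇ x_q` and `<_q = <_p ∩ x_q²`. -/
def TExt {θ : Ordinal} (p q : TCond θ) : Prop :=
  q.x ⊆ p.x ∧ ∀ a b, q.lt a b ↔ (p.lt a b ∧ a ∈ q.x ∧ b ∈ q.x)

/-- Incompatibility in `P(θ)`: no common extension. -/
def TIncomp {θ : Ordinal} (p q : TCond θ) : Prop :=
  ¬∃ r : TCond θ, TExt r p ∧ TExt r q

/-!
Each `p_α` is a five-node tree in which `α + 1` lies below `ω₁` and `α + 2` below `ω₁ + 1`, both
above `α`, while `α + 1` and `α + 2` stay incomparable. In a common extension of `p_α` and `p_β`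
with `α < β`, the tree property below `ω₁` puts `α + 1` under `β + 1`, hence under `β`'s branch to
`β + 2`; below `ω₁ + 1` it puts `α + 2` under `β + 2` as well. Two nodes below `β + 2` are comparable,
so `α + 1 < α + 2` in the extension, and therefore in `p_α`.
-/

open Cardinal

universe u v

theorem List.mem_map_prodMap_iff {α β γ δ : Type*} {f : α → γ} {g : β → δ} {l : List (α × β)}
    {c : γ} {d : δ} : (c, d) ∈ l.map (Prod.map f g) ↔ ∃ a b, (a, b) ∈ l ∧ f a = c ∧ g b = d := by
  simp [Prod.ext_iff]

namespace TCond

variable {θ : Ordinal}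

theorem ext {p q : TCond θ} (hx : p.x = q.x) (hlt : ∀ a b, p.lt a b ↔ q.lt a b) : p = q := by
  cases p; cases q
  congr
  funext a b
  exact propext (hlt a b)

theorem lt_of_common_upper (p : TCond θ) {a b c : Ordinal} (hac : p.lt a c) (hbc : p.lt b c)
    (hab : a < b) : p.lt a b := by
  rcases p.lt_tree a b c hac hbc with rfl | h | h
  · exact absurd hab (lt_irrefl a)
  · exact h
  · exact absurd (p.lt_ord b a h) hab.not_gt

section Pattern

variable {ι : Type*} [Fintype ι] [LinearOrder ι]

noncomputable def ofPattern (f : ι → Ordinal) (hf : StrictMono f) (hfθ : ∀ i, f i < θ)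
    (l : List (ι × ι)) (hl_lt : ∀ i j, (i, j) ∈ l → i < j)
    (hl_trans : ∀ i j k, (i, j) ∈ l → (j, k) ∈ l → (i, k) ∈ l)
    (hl_tree : ∀ i j k, (i, k) ∈ l → (j, k) ∈ l → i = j ∨ (i, j) ∈ l ∨ (j, i) ∈ l) :
    TCond θ where
  x := Finset.univ.image f
  lt a b := (a, b) ∈ l.map (Prod.map f f)
  mem_lt := by simpa using hfθ
  lt_mem a b h := by
    obtain ⟨i, j, -, rfl, rfl⟩ := List.mem_map_prodMap_iff.1 h
    simp
  lt_ord a b h := by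
    obtain ⟨i, j, hij, rfl, rfl⟩ := List.mem_map_prodMap_iff.1 h
    exact hf (hl_lt i j hij)
  lt_trans a b c hab hbc := by
    obtain ⟨i, j, hij, rfl, rfl⟩ := List.mem_map_prodMap_iff.1 hab
    obtain ⟨j', k, hjk, hj, rfl⟩ := List.mem_map_prodMap_iff.1 hbc
    rw [hf.injective hj] at hjk
    exact List.mem_map_prodMap_iff.2 ⟨i, k, hl_trans i j k hij hjk, rfl, rfl⟩
  lt_tree a b c hac hbc := by
    obtain ⟨i, k, hik, rfl, rfl⟩ := List.mem_map_prodMap_iff.1 hac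
    obtain ⟨j, k', hjk, rfl, hk⟩ := List.mem_map_prodMap_iff.1 hbc
    rw [hf.injective hk] at hjk
    rcases hl_tree i j k hik hjk with rfl | h | h
    · exact Or.inl rfl
    · exact Or.inr (Or.inl (List.mem_map_prodMap_iff.2 ⟨i, j, h, rfl, rfl⟩))
    · exact Or.inr (Or.inr (List.mem_map_prodMap_iff.2 ⟨j, i, h, rfl, rfl⟩))

variable {f : ι → Ordinal} {hf : StrictMono f} {hfθ : ∀ i, f i < θ} {l : List (ι × ι)}
  {hl_lt : ∀ i j, (i, j) ∈ l → i < j}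
  {hl_trans : ∀ i j k, (i, j) ∈ l → (j, k) ∈ l → (i, k) ∈ l}
  {hl_tree : ∀ i j k, (i, k) ∈ l → (j, k) ∈ l → i = j ∨ (i, j) ∈ l ∨ (j, i) ∈ l}

theorem ofPattern_lt_apply_iff {i j : ι} :
    (ofPattern f hf hfθ l hl_lt hl_trans hl_tree).lt (f i) (f j) ↔ (i, j) ∈ l := by
  refine List.mem_map_prodMap_iff.trans ⟨?_, fun h => ⟨i, j, h, rfl, rfl⟩⟩
  rintro ⟨i', j', h, hi, hj⟩
  rwa [← hf.injective hi, ← hf.injective hj]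

theorem mem_ofPattern_x {a : Ordinal} :
    a ∈ (ofPattern f hf hfθ l hl_lt hl_trans hl_tree).x ↔ ∃ i, f i = a := by
  simp [ofPattern]

end Pattern

end TCond

theorem TExt.lt {θ : Ordinal} {r p : TCond θ} (h : TExt r p) {a b : Ordinal} (hab : p.lt a b) :
    r.lt a b :=
  ((h.2 a b).1 hab).1

theorem TExt.lt_iff {θ : Ordinal} {r p : TCond θ} (h : TExt r p) {a b : Ordinal} (ha : a ∈ p.x)
    (hb : b ∈ p.x) : r.lt a b ↔ p.lt a b :=
  ⟨fun hab => (h.2 a b).2 ⟨hab, ha, hb⟩, h.lt⟩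

theorem TIncomp.symm {θ : Ordinal} {p q : TCond θ} (h : TIncomp p q) : TIncomp q p :=
  fun ⟨r, hq, hp⟩ => h ⟨r, hp, hq⟩

/-- `a₁, a₂, b₀, b₁, b₂, c, d` play the roles of `α + 1, α + 2, β, β + 1, β + 2, ω₁, ω₁ + 1`. -/
theorem tIncomp_of_crossing {θ : Ordinal} {p q : TCond θ} {a₁ a₂ b₀ b₁ b₂ c d : Ordinal}
    (hp₁ : p.lt a₁ c) (hp₂ : p.lt a₂ d) (hp₁₂ : ¬p.lt a₁ a₂)
    (hq₀₁ : q.lt b₀ b₁) (hq₀₂ : q.lt b₀ b₂) (hq₁ : q.lt b₁ c) (hq₂ : q.lt b₂ d)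
    (ha : a₁ < a₂) (h₀ : a₁ ≤ b₀) (h₁ : a₁ < b₁) (h₂ : a₂ < b₂) : TIncomp p q := by
  rintro ⟨r, hrp, hrq⟩
  have h₁' : r.lt a₁ b₁ := r.lt_of_common_upper (hrp.lt hp₁) (hrq.lt hq₁) h₁
  have h₀' : r.lt a₁ b₂ := by
    rcases h₀.eq_or_lt with rfl | h₀
    · exact hrq.lt hq₀₂
    · exact r.lt_trans _ _ _ (r.lt_of_common_upper h₁' (hrq.lt hq₀₁) h₀) (hrq.lt hq₀₂)
  have h₂' : r.lt a₂ b₂ := r.lt_of_common_upper (hrp.lt hp₂) (hrq.lt hq₂) h₂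
  have ha' : r.lt a₁ a₂ := r.lt_of_common_upper h₀' h₂' ha
  exact hp₁₂ ((hrp.lt_iff (p.lt_mem _ _ hp₁).1 (p.lt_mem _ _ hp₂).1).1 ha')

/-- Node `0, 1, 2, 3, 4` stands for `α, α + 1, α + 2, ω₁, ω₁ + 1`. -/
def tennenbaumPattern : List (Fin 5 × Fin 5) :=
  [(0, 1), (1, 3), (0, 3), (0, 2), (2, 4), (0, 4)]

noncomputable def tennenbaumNodes (α : Ordinal) : Fin 5 → Ordinal :=
  ![α, α + 1, α + 2, (ℵ₁).ord, (ℵ₁).ord + 1]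

theorem Ordinal.add_two_eq_add_one_add_one (α : Ordinal) : α + 2 = α + 1 + 1 := by
  rw [add_assoc, one_add_one_eq_two]

theorem strictMono_tennenbaumNodes {α : Ordinal} (hα : α < (ℵ₁).ord) :
    StrictMono (tennenbaumNodes α) := by
  have hω₁ := Cardinal.isSuccLimit_ord (Cardinal.aleph0_le_aleph 1)
  have hα₁ : α + 1 < (ℵ₁).ord := hω₁.add_one_lt hα
  refine Fin.strictMono_iff_lt_succ.2 fun i => ?_
  fin_cases i <;> simp only [tennenbaumNodes, Ordinal.add_two_eq_add_one_add_one]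
  · exact lt_add_one α
  · exact lt_add_one (α + 1)
  · exact hω₁.add_one_lt hα₁
  · exact lt_add_one _

noncomputable def tennenbaumCond {θ : Ordinal} (hθ : (ℵ₁).ord + 1 < θ) {α : Ordinal}
    (hα : α < (ℵ₁).ord) : TCond θ :=
  TCond.ofPattern (tennenbaumNodes α) (strictMono_tennenbaumNodes hα)
    (fun i => ((strictMono_tennenbaumNodes hα).monotone (Fin.le_last i)).trans_lt hθ)
    tennenbaumPattern (by decide) (by decide) (by decide)

def tennenbaumAntichain (θ : Ordinal) : Set (TCond θ) :=
  {p | ∃ α < (ℵ₁).ord, p.x = {α, α + 1, α + 2, (ℵ₁).ord, (ℵ₁).ord + 1} ∧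
    ∀ a b, p.lt a b ↔ (a, b) ∈ [(α, α + 1), (α + 1, (ℵ₁).ord), (α, (ℵ₁).ord), (α, α + 2),
      (α + 2, (ℵ₁).ord + 1), (α, (ℵ₁).ord + 1)]}

section

variable {θ : Ordinal} (hθ : (ℵ₁).ord + 1 < θ) {α : Ordinal} (hα : α < (ℵ₁).ord)

theorem tennenbaumCond_x :
    (tennenbaumCond hθ hα).x = {α, α + 1, α + 2, (ℵ₁).ord, (ℵ₁).ord + 1} := by
  ext a
  simp [tennenbaumCond, TCond.ofPattern, tennenbaumNodes, Fin.exists_fin_succ, eq_comm]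

theorem tennenbaumCond_lt_iff {a b : Ordinal} :
    (tennenbaumCond hθ hα).lt a b ↔ (a, b) ∈ [(α, α + 1), (α + 1, (ℵ₁).ord), (α, (ℵ₁).ord),
      (α, α + 2), (α + 2, (ℵ₁).ord + 1), (α, (ℵ₁).ord + 1)] :=
  Iff.rfl

theorem tennenbaumCond_lt_apply_iff {i j : Fin 5} :
    (tennenbaumCond hθ hα).lt (tennenbaumNodes α i) (tennenbaumNodes α j) ↔
      (i, j) ∈ tennenbaumPattern :=
  TCond.ofPattern_lt_apply_iff

end

theorem mem_tennenbaumAntichain_iff {θ : Ordinal} (hθ : (ℵ₁).ord + 1 < θ) {p : TCond θ} :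
    p ∈ tennenbaumAntichain θ ↔ ∃ α, ∃ hα : α < (ℵ₁).ord, tennenbaumCond hθ hα = p := by
  constructor
  · rintro ⟨α, hα, hx, hlt⟩
    exact ⟨α, hα, TCond.ext ((tennenbaumCond_x hθ hα).trans hx.symm)
      fun a b => (tennenbaumCond_lt_iff hθ hα).trans (hlt a b).symm⟩
  · rintro ⟨α, hα, rfl⟩
    exact ⟨α, hα, tennenbaumCond_x hθ hα, fun a b => tennenbaumCond_lt_iff hθ hα⟩

theorem add_one_lt_of_mem_tennenbaumAntichain {θ : Ordinal} {p : TCond θ}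
    (hp : p ∈ tennenbaumAntichain θ) : (ℵ₁).ord + 1 < θ := by
  obtain ⟨α, -, hx, -⟩ := hp
  exact p.mem_lt _ (by simp [hx])

theorem tennenbaumCond_injective {θ : Ordinal} (hθ : (ℵ₁).ord + 1 < θ) {α β : Ordinal}
    (hα : α < (ℵ₁).ord) (hβ : β < (ℵ₁).ord) (h : tennenbaumCond hθ hα = tennenbaumCond hθ hβ) :
    α = β := by
  -- `α` is the least node of `tennenbaumCond hθ hα`
  have key : ∀ {α β} (hα : α < (ℵ₁).ord) (hβ : β < (ℵ₁).ord),
      tennenbaumCond hθ hα = tennenbaumCond hθ hβ → β ≤ α := by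
    intro α β hα hβ h
    have hmem : α ∈ (tennenbaumCond hθ hβ).x := h ▸ TCond.mem_ofPattern_x.2 ⟨0, rfl⟩
    obtain ⟨i, rfl⟩ := TCond.mem_ofPattern_x.1 hmem
    exact (strictMono_tennenbaumNodes hβ).monotone (Fin.zero_le i)
  exact le_antisymm (key hβ hα h.symm) (key hα hβ h)

theorem tIncomp_tennenbaumCond {θ : Ordinal} (hθ : (ℵ₁).ord + 1 < θ) {α β : Ordinal}
    (hα : α < (ℵ₁).ord) (hβ : β < (ℵ₁).ord) (hαβ : α < β) :
    TIncomp (tennenbaumCond hθ hα) (tennenbaumCond hθ hβ) := by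
  have hp (i j : Fin 5) := tennenbaumCond_lt_apply_iff hθ hα (i := i) (j := j)
  have hq (i j : Fin 5) := tennenbaumCond_lt_apply_iff hθ hβ (i := i) (j := j)
  have hα₁ : α + 1 ≤ β := Order.add_one_le_of_lt hαβ
  refine tIncomp_of_crossing (b₀ := β) ((hp 1 3).2 (by decide)) ((hp 2 4).2 (by decide))
    (fun h => absurd ((hp 1 2).1 h) (by decide)) ((hq 0 1).2 (by decide))
    ((hq 0 2).2 (by decide)) ((hq 1 3).2 (by decide)) ((hq 2 4).2 (by decide))
    (strictMono_tennenbaumNodes hα (show (1 : Fin 5) < 2 by decide)) hα₁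
    (Order.lt_add_one_iff.2 hα₁) ?_
  show α + 2 < β + 2
  rw [Ordinal.add_two_eq_add_one_add_one, Ordinal.add_two_eq_add_one_add_one]
  exact Order.lt_add_one_iff.2 (Order.add_one_le_of_lt (Order.lt_add_one_iff.2 hα₁))

theorem tennenbaumAntichain_pairwise_tIncomp (θ : Ordinal) :
    (tennenbaumAntichain θ).Pairwise TIncomp := by
  intro p hp q hq hpq
  have hθ := add_one_lt_of_mem_tennenbaumAntichain hp
  obtain ⟨α, hα, rfl⟩ := (mem_tennenbaumAntichain_iff hθ).1 hp
  obtain ⟨β, hβ, rfl⟩ := (mem_tennenbaumAntichain_iff hθ).1 hq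
  rcases lt_trichotomy α β with h | rfl | h
  · exact tIncomp_tennenbaumCond hθ hα hβ h
  · exact absurd rfl hpq
  · exact (tIncomp_tennenbaumCond hθ hβ hα h).symm

noncomputable def tennenbaumCondEquiv {θ : Ordinal} (hθ : (ℵ₁).ord + 1 < θ) :
    Set.Iio (ℵ₁).ord ≃ tennenbaumAntichain θ :=
  Equiv.ofBijective
    (fun α => ⟨tennenbaumCond hθ α.2, (mem_tennenbaumAntichain_iff hθ).2 ⟨_, _, rfl⟩⟩)
    ⟨fun α β h => Subtype.ext (tennenbaumCond_injective hθ α.2 β.2 (congrArg Subtype.val h)),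
      fun ⟨p, hp⟩ => by
        obtain ⟨α, hα, rfl⟩ := (mem_tennenbaumAntichain_iff hθ).1 hp
        exact ⟨⟨α, hα⟩, rfl⟩⟩

theorem Cardinal.mk_Iio_ord_aleph_one : #(Set.Iio (ℵ₁).ord) = ℵ₁ := by
  simp [Cardinal.mk_Iio_ordinal]

theorem mk_tennenbaumAntichain {θ : Ordinal} (hθ : (ℵ₁).ord + 1 < θ) :
    #(tennenbaumAntichain θ) = ℵ₁ := by
  rw [← (tennenbaumCondEquiv hθ).cardinal_eq, Cardinal.mk_Iio_ord_aleph_one]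

theorem nonempty_equiv_tennenbaumAntichain {θ : Ordinal.{u}} (hθ : (ℵ₁).ord + 1 < θ) :
    Nonempty (Set.Iio (Cardinal.ord.{v} ℵ₁) ≃ tennenbaumAntichain θ) :=
  Cardinal.lift_mk_eq'.1 <| by
    simp only [Cardinal.mk_Iio_ord_aleph_one, mk_tennenbaumAntichain hθ, Cardinal.lift_aleph,
      Ordinal.lift_one]

/-- For `θ > ω₁ + 1`, the set
`A = {p : x_p = {α, α+1, α+2, ω₁, ω₁+1}, α <_p α+1 <_p ω₁,
α <_p α+2 <_p ω₁+1, α+1 ≁_p α+2}` is an antichain in `P(θ)` of size `ω₁`;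
in particular `P(θ)` does not satisfy the countable chain condition. -/
theorem tennenbaum_not_ccc {θ : Ordinal}
    (hθ : (Cardinal.aleph 1).ord + 1 < θ) :
    Set.Pairwise
      {p : TCond θ | ∃ α < (Cardinal.aleph 1).ord,
        p.x = {α, α + 1, α + 2, (Cardinal.aleph 1).ord,
          (Cardinal.aleph 1).ord + 1} ∧
        ∀ a b, p.lt a b ↔
          ((a, b) ∈ ([(α, α + 1), (α + 1, (Cardinal.aleph 1).ord),
            (α, (Cardinal.aleph 1).ord), (α, α + 2),
            (α + 2, (Cardinal.aleph 1).ord + 1),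
            (α, (Cardinal.aleph 1).ord + 1)] : List (Ordinal × Ordinal)))}
      (fun p q => TIncomp p q) ∧
    (∃ f : Set.Iio (Cardinal.aleph 1).ord →
      {p : TCond θ | ∃ α < (Cardinal.aleph 1).ord,
        p.x = {α, α + 1, α + 2, (Cardinal.aleph 1).ord,
          (Cardinal.aleph 1).ord + 1} ∧
        ∀ a b, p.lt a b ↔
          ((a, b) ∈ ([(α, α + 1), (α + 1, (Cardinal.aleph 1).ord),
            (α, (Cardinal.aleph 1).ord), (α, α + 2),
            (α + 2, (Cardinal.aleph 1).ord + 1),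
            (α, (Cardinal.aleph 1).ord + 1)] : List (Ordinal × Ordinal)))},
      Function.Bijective f) ∧
    ¬(∀ B : Set (TCond θ), B.Pairwise (fun p q => TIncomp p q) → B.Countable) := by
  have hA := tennenbaumAntichain_pairwise_tIncomp θ
  have hcard := mk_tennenbaumAntichain hθ
  refine ⟨hA, ?_, fun hccc => ?_⟩
  · exact (nonempty_equiv_tennenbaumAntichain hθ).elim fun e => ⟨e, e.bijective⟩
  · have hle := Cardinal.le_aleph0_iff_set_countable.2 (hccc _ hA)
    rw [hcard] at hle
    exact Cardinal.aleph0_lt_aleph_one.not_ge hle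
end
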